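/- For any toll functional f, any admissible n, and any 1 ≤ k ≤ n: E[F_k(𝒯_n)] = n·E[f_k(ξ_1,…,ξ_k) | S_n = n − 1] = n·(P(S_{n−k} = n − k)/P(S_n = n − 1))·E[f_k(ξ_1,…,ξ_k)]. -/

import Mathlib

/-!
Rotating the indices of `(ξ_1, …, ξ_n)` preserves both its law and the event `S_n = n - 1`,
so each of the `n` cyclic windows contributes as much as the first one. For the first window,
a toll functional of `(ξ_1, …, ξ_k)` vanishes unless `S_k = k - 1`, and on that event
`S_n = n - 1` says exactly that `ξ_{k+1} + ⋯ + ξ_n = n - k`, an event independent of the window.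
-/

open MeasureTheory ProbabilityTheory Filter Finset Topology
open scoped ENNReal NNReal

noncomputable section

namespace CGW

/-- `d` is the degree sequence (depth-first list of outdegrees) of a plane tree:
`d` is nonempty, `d₁ + ⋯ + d_j ≥ j` for `1 ≤ j < n`, and `d₁ + ⋯ + d_n = n - 1`. -/
def IsDegSeq (d : List ℕ) : Prop :=
  d ≠ [] ∧ (∀ j, 1 ≤ j → j < d.length → j ≤ (d.take j).sum) ∧ d.sum = d.length - 1

/-- A toll functional vanishes off degree sequences. -/
def IsToll (f : List ℕ → ℝ) : Prop := ∀ d, ¬ IsDegSeq d → f d = 0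

/-- The additive functional `F` induced by a toll functional `f`:
the sum of `f` over all contiguous windows `(d_i, …, d_j)`, `1 ≤ i ≤ j ≤ n`. -/
def addF (f : List ℕ → ℝ) (d : List ℕ) : ℝ :=
  ∑ i ∈ Finset.range d.length, ∑ k ∈ Finset.Icc 1 (d.length - i), f ((d.drop i).take k)

/-- Product measure: the law of `(ξ_1, …, ξ_n)` for i.i.d. `ξ_i ∼ ν`. -/
def piMeas (ν : Measure ℕ) (n : ℕ) : Measure (Fin n → ℕ) := Measure.pi fun _ => ν

/-- `P(S_n = m)`. -/
def probS (ν : Measure ℕ) (n m : ℕ) : ℝ := ((piMeas ν n) {x | ∑ i, x i = m}).toReal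

/-- `n` is admissible if `n ≥ 1` and `P(S_n = n - 1) > 0`. -/
def Admissible (ν : Measure ℕ) (n : ℕ) : Prop := 1 ≤ n ∧ 0 < probS ν n (n - 1)

/-- The filter "`n → ∞` along admissible `n`". -/
def admFilter (ν : Measure ℕ) : Filter ℕ := atTop ⊓ 𝓟 {n | Admissible ν n}

/-- `E[g(ξ_1, …, ξ_k)]`. -/
def EE (ν : Measure ℕ) (k : ℕ) (g : List ℕ → ℝ) : ℝ :=
  ∫ x : Fin k → ℕ, g (List.ofFn x) ∂(piMeas ν k)

/-- The conditional expectation `E[g(ξ_1,…,ξ_n) ∣ S_n = n - 1]`. -/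
def condE (ν : Measure ℕ) (n : ℕ) (g : (Fin n → ℕ) → ℝ) : ℝ :=
  (∫ x in {x : Fin n → ℕ | ∑ i, x i = n - 1}, g x ∂(piMeas ν n)) / probS ν n (n - 1)

/-- The conditional variance given `S_n = n - 1`. -/
def varTn (ν : Measure ℕ) (n : ℕ) (g : (Fin n → ℕ) → ℝ) : ℝ :=
  condE ν n (fun x => g x ^ 2) - (condE ν n g) ^ 2

/-- The conditional covariance given `S_n = n - 1`. -/
def covTn (ν : Measure ℕ) (n : ℕ) (g h : (Fin n → ℕ) → ℝ) : ℝ :=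
  condE ν n (fun x => g x * h x) - condE ν n g * condE ν n h

/-- The cyclic window `(x_i, x_{i+1}, …, x_{i+k-1})`, indices mod `n` (0-indexed). -/
def cycWin {n : ℕ} (x : Fin n → ℕ) (i k : ℕ) : List ℕ :=
  if h : 0 < n then (List.range k).map fun j => x ⟨(i + j) % n, Nat.mod_lt _ h⟩ else []

/-- The statistic `Σ_{k=1}^n Σ_{i=1}^n f(x_i, …, x_{i+k-1 mod n})` whose conditional law
given `S_n = n - 1` is the law of `F(𝒯_n)`. -/
def cycF (f : List ℕ → ℝ) (n : ℕ) (x : Fin n → ℕ) : ℝ :=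
  ∑ i ∈ Finset.range n, ∑ k ∈ Finset.Icc 1 n, f (cycWin x i k)

/-- `E[F(𝒯_n)]`. -/
def EFTn (ν : Measure ℕ) (f : List ℕ → ℝ) (n : ℕ) : ℝ := condE ν n (cycF f n)

/-- `Var F(𝒯_n)`. -/
def VarFTn (ν : Measure ℕ) (f : List ℕ → ℝ) (n : ℕ) : ℝ := varTn ν n (cycF f n)

/-- `E[f(𝒯_n)] = n·E[f(ξ_1,…,ξ_n)] / P(S_n = n-1)`. -/
def EfTn (ν : Measure ℕ) (f : List ℕ → ℝ) (n : ℕ) : ℝ :=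
  n * EE ν n f / probS ν n (n - 1)

/-- `E[f(𝒯_n)²] = n·E[f(ξ_1,…,ξ_n)²] / P(S_n = n-1)`. -/
def Ef2Tn (ν : Measure ℕ) (f : List ℕ → ℝ) (n : ℕ) : ℝ :=
  n * EE ν n (fun d => f d ^ 2) / probS ν n (n - 1)

/-- `μ = E[f(𝒯)] = Σ_{k ≥ 1} E[f(ξ_1,…,ξ_k)]`. -/
def muF (ν : Measure ℕ) (f : List ℕ → ℝ) : ℝ := ∑' k : ℕ, EE ν (k + 1) f

/-- `γ² = 2 Σ_{k≥1} E[f(ξ_1,…,ξ_k)(F(ξ_1,…,ξ_k) - kμ)]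
      - (Σ_{k≥1} E[f(ξ_1,…,ξ_k)²] - μ²) - μ²/σ²`. -/
def gamma2 (ν : Measure ℕ) (f : List ℕ → ℝ) (σ2 : ℝ) : ℝ :=
  2 * (∑' k : ℕ, EE ν (k + 1) fun d => f d * (addF f d - (k + 1) * muF ν f))
    - ((∑' k : ℕ, EE ν (k + 1) fun d => f d ^ 2) - (muF ν f) ^ 2)
    - (muF ν f) ^ 2 / σ2

/-- `π_T = p_{t_1} ⋯ p_{t_ℓ}` for the plane tree with degree sequence `t`. -/
def piT (ν : Measure ℕ) (t : List ℕ) : ℝ := (t.map fun j => (ν {j}).toReal).prod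

/-- The number of fringe subtrees of the tree with degree sequence `t` equal to the tree
with degree sequence `t'` (the number of windows of `t` equal to `t'`). -/
def subCount (t' t : List ℕ) : ℕ :=
  ((Finset.range (t.length + 1 - t'.length)).filter
    fun i => (t.drop i).take t'.length = t').card

/-- The cyclic window count: the statistic whose conditional law given `S_n = n - 1`
is the law of the fringe-subtree count `n_{T'}(𝒯_n)`, where `t'` is the degree sequence
of `T'`. -/
def cycCount (t' : List ℕ) (n : ℕ) (x : Fin n → ℕ) : ℕ :=
  ((Finset.range n).filter fun i => cycWin x i t'.length = t').card

/-- Asymptotic covariance matrix `γ_{T,T'}` of fringe-subtree counts. -/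
def gammaT (ν : Measure ℕ) (σ2 : ℝ) (t t' : List ℕ) : ℝ :=
  if t = t' then piT ν t - (2 * (t.length : ℝ) - 1 + σ2⁻¹) * piT ν t ^ 2
  else (subCount t' t : ℝ) * piT ν t + (subCount t t' : ℝ) * piT ν t'
    - ((t.length : ℝ) + (t'.length : ℝ) - 1 + σ2⁻¹) * piT ν t * piT ν t'

/-- `f_k(d) = f(d)·1{|d| = k}`. -/
def fk (f : List ℕ → ℝ) (k : ℕ) : List ℕ → ℝ := fun d => if d.length = k then f d else 0

/-- The statistic `Σ_{i=1}^n f_k(x_i, …, x_{i+k-1 mod n})` whose conditional law given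
`S_n = n - 1` is the law of `F_k(𝒯_n)`. -/
def cycFk (f : List ℕ → ℝ) (k n : ℕ) (x : Fin n → ℕ) : ℝ :=
  ∑ i ∈ Finset.range n, fk f k (cycWin x i k)

/-- Plane (ordered rooted) trees. -/
inductive PTree : Type where
  | node : List PTree → PTree

namespace PTree

/-- The number of nodes of a plane tree. -/
def size : PTree → ℕ
  | node ts => 1 + (ts.attach.map fun t => size t.1).sum
  decreasing_by
    have := List.sizeOf_lt_of_mem t.2
    simp only [PTree.node.sizeOf_spec]
    omega

/-- The truncation of a plane tree at height `M`. -/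
def trunc : ℕ → PTree → PTree
  | 0, _ => node []
  | M + 1, node ts => node (ts.attach.map fun t => trunc M t.1)
  decreasing_by
    have := List.sizeOf_lt_of_mem t.2
    simp only [PTree.node.sizeOf_spec]
    omega

/-- The degree sequence (depth-first list of outdegrees) of a plane tree. -/
def degSeq : PTree → List ℕ
  | node ts => ts.length :: (ts.attach.map fun t => degSeq t.1).flatten
  decreasing_by
    have := List.sizeOf_lt_of_mem t.2
    simp only [PTree.node.sizeOf_spec]
    omega

end PTree

/-- `f` is a local functional of plane trees with cut-off `M`:
`f(T)` depends only on `T` truncated at height `M`. -/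
def IsLocal (f : List ℕ → ℝ) (M : ℕ) : Prop :=
  ∀ T : PTree, f T.degSeq = f ((T.trunc M).degSeq)

/-- `f` is a weakly local functional of plane trees with cut-off `M`:
`f(T)` depends only on the pair `(|T|, T^{(M)})`. -/
def IsWeaklyLocal (f : List ℕ → ℝ) (M : ℕ) : Prop :=
  ∀ T T' : PTree, T.size = T'.size → T.trunc M = T'.trunc M → f T.degSeq = f T'.degSeq

/-- `A_k`: the sup of `|f|` over degree sequences of length `k`, as an element of `ℝ≥0∞`. -/
def Abound (f : List ℕ → ℝ) (k : ℕ) : ℝ≥0∞ :=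
  ⨆ d : {d : List ℕ // IsDegSeq d ∧ d.length = k}, ENNReal.ofReal |f d.1|

end CGW

namespace MeasureTheory

variable {α : Type*} [MeasurableSpace α] (μ : Measure α) [SigmaFinite μ]

theorem setIntegral_pi_comp_perm {ι : Type*} [Fintype ι] (e : ι ≃ ι) {s : Set (ι → α)}
    (hs : ∀ x, x ∘ e ∈ s ↔ x ∈ s) (g : (ι → α) → ℝ) :
    ∫ x in s, g (x ∘ e) ∂(Measure.pi fun _ => μ)
      = ∫ x in s, g x ∂(Measure.pi fun _ => μ) := by
  have he : ⇑(MeasurableEquiv.piCongrLeft (fun _ => α) e.symm) = fun x => x ∘ e := by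
    ext x i
    simp [MeasurableEquiv.coe_piCongrLeft, Equiv.piCongrLeft_apply_eq_cast]
  have h := (measurePreserving_piCongrLeft (fun _ => μ) e.symm).setIntegral_preimage_emb
    (MeasurableEquiv.measurableEmbedding _) g s
  rw [he] at h
  convert h using 3
  exact Set.ext fun x => (hs x).symm

theorem integral_pi_castAdd_mul_natAdd {k m : ℕ} (F : (Fin k → α) → ℝ) (G : (Fin m → α) → ℝ) :
    ∫ x, F (fun i => x (Fin.castAdd m i)) * G (fun j => x (Fin.natAdd k j))
        ∂(Measure.pi fun _ => μ)
      = (∫ y, F y ∂(Measure.pi fun _ => μ)) * ∫ z, G z ∂(Measure.pi fun _ => μ) := by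
  let e : (Fin (k + m) → α) ≃ᵐ (Fin k → α) × (Fin m → α) :=
    (MeasurableEquiv.piCongrLeft (fun _ => α) finSumFinEquiv).symm.trans
      (MeasurableEquiv.sumPiEquivProdPi fun _ => α)
  have he : MeasurePreserving e (Measure.pi fun _ => μ)
      ((Measure.pi fun _ => μ).prod (Measure.pi fun _ => μ)) :=
    (measurePreserving_sumPiEquivProdPi _).comp
      (measurePreserving_piCongrLeft _ finSumFinEquiv).symm
  rw [← integral_prod_mul, ← he.integral_comp' (fun p => F p.1 * G p.2)]
  rfl

end MeasureTheory

namespace CGW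

theorem finite_setOf_sum_eq (n m : ℕ) : {x : Fin n → ℕ | ∑ i, x i = m}.Finite := by
  refine (Set.Finite.pi (t := fun _ => Set.Iic m) fun _ => Set.finite_Iic m).subset ?_
  rintro x rfl i -
  exact Finset.single_le_sum (fun j _ => Nat.zero_le (x j)) (Finset.mem_univ i)

theorem cycWin_eq_ofFn {n k : ℕ} [NeZero n] (hk : k ≤ n) (x : Fin n → ℕ) (i : Fin n) :
    cycWin x i k = List.ofFn fun j : Fin k => x (i + Fin.castLE hk j) := by
  rw [cycWin, dif_pos (Nat.pos_of_neZero n)]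
  refine List.ext_getElem (by simp) fun j _ _ => ?_
  simp [Fin.add_def]

theorem setIntegral_cycFk (ν : Measure ℕ) [IsFiniteMeasure ν] (f : List ℕ → ℝ) {n k : ℕ}
    (hk : k ≤ n) (m : ℕ) :
    ∫ x in {x | ∑ i, x i = m}, cycFk f k n x ∂(piMeas ν n)
      = n * ∫ x in {x | ∑ i, x i = m}, fk f k (List.ofFn fun j => x (Fin.castLE hk j))
          ∂(piMeas ν n) := by
  have hint (g : (Fin n → ℕ) → ℝ) : IntegrableOn g {x | ∑ i, x i = m} (piMeas ν n) := by
    rw [piMeas]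
    exact IntegrableOn.of_finite (finite_setOf_sum_eq n m)
  have hrot (i : Fin n) :
      ∫ x in {x | ∑ i, x i = m}, fk f k (cycWin x i k) ∂(piMeas ν n)
        = ∫ x in {x | ∑ i, x i = m}, fk f k (List.ofFn fun j => x (Fin.castLE hk j))
            ∂(piMeas ν n) := by
    have : NeZero n := ⟨i.pos.ne'⟩
    simp only [cycWin_eq_ofFn hk]
    exact setIntegral_pi_comp_perm ν (Equiv.addLeft i) (fun x =>
      Iff.of_eq (congrArg (· = m) (Equiv.sum_comp (Equiv.addLeft i) x)))
      (fun y => fk f k (List.ofFn fun j => y (Fin.castLE hk j)))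
  simp only [cycFk, Finset.sum_range]
  rw [integral_finsetSum _ fun i _ => hint _]
  simp [hrot]

theorem IsToll.fk_eq_zero {f : List ℕ → ℝ} (hf : IsToll f) {k : ℕ} {d : List ℕ}
    (h : d.sum ≠ k - 1) : fk f k d = 0 := by
  unfold fk
  split_ifs with hlen
  · exact hf d fun hd => h (hlen ▸ hd.2.2)
  · rfl

theorem setIntegral_fk_ofFn_castLE (ν : Measure ℕ) [SigmaFinite ν] {f : List ℕ → ℝ}
    (hf : IsToll f) {n k : ℕ} (hk1 : 1 ≤ k) (hkn : k ≤ n) :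
    ∫ x in {x | ∑ i, x i = n - 1}, fk f k (List.ofFn fun i => x (Fin.castLE hkn i))
        ∂(piMeas ν n)
      = probS ν (n - k) (n - k) * EE ν k (fk f k) := by
  obtain ⟨m, rfl⟩ := Nat.exists_eq_add_of_le hkn
  change ∫ x : Fin (k + m) → ℕ in _, fk f k (List.ofFn fun i => x (Fin.castAdd m i)) ∂_ = _
  have hsplit (x : Fin (k + m) → ℕ) :
      {x : Fin (k + m) → ℕ | ∑ i, x i = k + m - 1}.indicator
          (fun x => fk f k (List.ofFn fun i => x (Fin.castAdd m i))) x
        = fk f k (List.ofFn fun i => x (Fin.castAdd m i))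
          * {z : Fin m → ℕ | ∑ j, z j = m}.indicator 1 (fun j => x (Fin.natAdd k j)) := by
    have hsum := Fin.sum_univ_add x
    simp only [Set.indicator_apply, Set.mem_ofPred_eq, Pi.one_apply, mul_ite, mul_one, mul_zero]
    by_cases hy : ∑ i, x (Fin.castAdd m i) = k - 1
    · have : ∑ i, x i = k + m - 1 ↔ ∑ j, x (Fin.natAdd k j) = m := by omega
      simp only [this]
    · have h0 : fk f k (List.ofFn fun i => x (Fin.castAdd m i)) = 0 :=
        hf.fk_eq_zero (by rwa [List.sum_ofFn])
      simp [h0]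
  rw [Nat.add_sub_cancel_left, ← integral_indicator .of_discrete]
  simp only [hsplit, piMeas]
  rw [integral_pi_castAdd_mul_natAdd ν (fun y => fk f k (List.ofFn y))
    ({z : Fin m → ℕ | ∑ j, z j = m}.indicator 1), integral_indicator_one .of_discrete,
    EE, probS, piMeas, piMeas, Measure.real_def, mul_comm]

theorem mean_Fk_general
    (ν : Measure ℕ) [IsProbabilityMeasure ν]
    (f : List ℕ → ℝ) (hf : IsToll f)
    (n k : ℕ) (hk1 : 1 ≤ k) (hkn : k ≤ n) :
    condE ν n (cycFk f k n)
        = n * condE ν n (fun x => fk f k (List.ofFn fun i : Fin k => x (Fin.castLE hkn i))) ∧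
    condE ν n (cycFk f k n)
        = n * (probS ν (n - k) (n - k) / probS ν n (n - 1)) * EE ν k (fk f k) := by
  have hcyc := setIntegral_cycFk ν f hkn (n - 1)
  refine ⟨?_, ?_⟩
  · rw [condE, condE, hcyc, mul_div_assoc]
  · rw [condE, hcyc, setIntegral_fk_ofFn_castLE ν hf hk1 hkn]
    ring

/-- For any toll functional `f`, admissible `n`, and `1 ≤ k ≤ n`:
`E[F_k(𝒯_n)] = n·E[f_k(ξ_1,…,ξ_k) ∣ S_n = n-1]
             = n·(P(S_{n-k} = n-k)/P(S_n = n-1))·E[f_k(ξ_1,…,ξ_k)]`. -/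
theorem mean_Fk
    (ν : Measure ℕ) [IsProbabilityMeasure ν]
    (hp0 : 0 < ν {0})
    (hmom1 : Integrable (fun x : ℕ => (x : ℝ)) ν)
    (hmean : ∫ x : ℕ, (x : ℝ) ∂ν = 1)
    (hmom2 : Integrable (fun x : ℕ => ((x : ℝ)) ^ 2) ν)
    (σ2 : ℝ) (hσ2 : σ2 = ∫ x : ℕ, ((x : ℝ) - 1) ^ 2 ∂ν) (hσ2pos : 0 < σ2)
    (f : List ℕ → ℝ) (hf : IsToll f)
    (n k : ℕ) (hadm : Admissible ν n) (hk1 : 1 ≤ k) (hkn : k ≤ n) :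
    condE ν n (cycFk f k n)
        = n * condE ν n (fun x => fk f k (List.ofFn fun i : Fin k => x (Fin.castLE hkn i))) ∧
    condE ν n (cycFk f k n)
        = n * (probS ν (n - k) (n - k) / probS ν n (n - 1)) * EE ν k (fk f k) :=
  mean_Fk_general ν f hf n k hk1 hkn

end CGW
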